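/- Let b(x) = λx + δ with λ > 0 and δ ≥ 0, and set ρ = λ·a. Then for every β > 0, C(β) = 1/(ρβ + δ) + (ρβ/(ρβ + δ))·∫₀¹ (1 − x)^{ρβ+δ} e^{ρβx} dx. -/

import Mathlib

open MeasureTheory Real Filter Set

/-- `C(β) = ∫₀¹ (1-x)⁻¹ exp(-∫₀ˣ b(aβy)/(1-y) dy) dx`. -/
noncomputable def Cfun (a : ℝ) (b : ℝ → ℝ) (β : ℝ) : ℝ :=
  ∫ x in (0:ℝ)..1, (1 - x)⁻¹ * Real.exp (-∫ y in (0:ℝ)..x, b (a * β * y) / (1 - y))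

/-!
For `b(x) = λx + δ` and `p = ρβ` the inner integrand `(py + δ)/(1 - y)` has the primitive
`-py - c log(1 - y)` with `c = p + δ > 0`, so the integrand of `C(β)` is `(1 - x)^(c-1) e^{px}`.
Differentiating `(1 - x)^c e^{px}`, which is `1` at `0` and `0` at `1`, integrates this by parts.
-/

theorem integral_affine_div_one_sub (p q : ℝ) {x : ℝ} (hx : x < 1) :
    ∫ y in (0:ℝ)..x, (p * y + q) / (1 - y) = -p * x - (p + q) * Real.log (1 - x) := by
  have hpos : ∀ y ∈ uIcc (0:ℝ) x, 0 < 1 - y := fun y hy => by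
    linarith [hy.2, max_lt one_pos hx]
  have hderiv : ∀ y ∈ uIcc (0:ℝ) x,
      HasDerivAt (fun y => -p * y - (p + q) * Real.log (1 - y)) ((p * y + q) / (1 - y)) y := by
    intro y hy
    have hlog := ((hasDerivAt_id y).const_sub 1).log (hpos y hy).ne'
    refine (((hasDerivAt_id y).const_mul (-p)).sub (hlog.const_mul (p + q))).congr_deriv ?_
    simp only [id_eq]
    field_simp [(hpos y hy).ne']
    ring
  have hcont : ContinuousOn (fun y => (p * y + q) / (1 - y)) (uIcc 0 x) :=
    ContinuousOn.div (by fun_prop) (by fun_prop) fun y hy => (hpos y hy).ne'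
  rw [intervalIntegral.integral_eq_sub_of_hasDerivAt hderiv hcont.intervalIntegrable]
  simp

theorem inv_one_sub_mul_exp_neg_integral_affine_div_one_sub (p q : ℝ) {x : ℝ} (hx : x < 1) :
    (1 - x)⁻¹ * Real.exp (-∫ y in (0:ℝ)..x, (p * y + q) / (1 - y)) =
      (1 - x) ^ (p + q - 1) * Real.exp (p * x) := by
  have h1x : 0 < 1 - x := by linarith
  rw [integral_affine_div_one_sub p q hx, rpow_sub h1x, rpow_one, rpow_def_of_pos h1x,
    div_eq_mul_inv, mul_right_comm, ← exp_add]
  ring_nf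

theorem Cfun_affine (a lam δ β : ℝ) :
    Cfun a (fun x => lam * x + δ) β =
      ∫ x in (0:ℝ)..1, (1 - x) ^ (lam * a * β + δ - 1) * Real.exp (lam * a * β * x) := by
  refine intervalIntegral.integral_congr_ae ?_
  filter_upwards [Measure.ae_ne volume (1:ℝ)] with x hx1 hx
  rw [uIoc_of_le zero_le_one] at hx
  simp_rw [← inv_one_sub_mul_exp_neg_integral_affine_div_one_sub _ δ (hx.2.lt_of_ne hx1),
    mul_assoc]

theorem intervalIntegrable_one_sub_rpow {r : ℝ} (hr : -1 < r) :
    IntervalIntegrable (fun x : ℝ => (1 - x) ^ r) volume 0 1 := by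
  simpa using
    ((intervalIntegral.intervalIntegrable_rpow' (a := 0) (b := 1) hr).comp_sub_left 1).symm

theorem integral_one_sub_rpow_sub_one_mul_exp (ρ : ℝ) {c : ℝ} (hc : 0 < c) :
    ∫ x in (0:ℝ)..1, (1 - x) ^ (c - 1) * Real.exp (ρ * x) =
      1 / c + ρ / c * ∫ x in (0:ℝ)..1, (1 - x) ^ c * Real.exp (ρ * x) := by
  set I := ∫ x in (0:ℝ)..1, (1 - x) ^ (c - 1) * Real.exp (ρ * x)
  set J := ∫ x in (0:ℝ)..1, (1 - x) ^ c * Real.exp (ρ * x)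
  have hcont : Continuous fun x : ℝ => (1 - x) ^ c * Real.exp (ρ * x) :=
    ((continuous_const.sub continuous_id).rpow_const fun _ => Or.inr hc.le).mul (by fun_prop)
  have hI : IntervalIntegrable (fun x : ℝ => (1 - x) ^ (c - 1) * Real.exp (ρ * x)) volume 0 1 :=
    (intervalIntegrable_one_sub_rpow (by linarith)).mul_continuousOn (by fun_prop)
  have hJ := hcont.intervalIntegrable (μ := volume) 0 1
  have hderiv : ∀ x ∈ Ioo (0:ℝ) 1, HasDerivAt (fun x => (1 - x) ^ c * Real.exp (ρ * x))
      (ρ * ((1 - x) ^ c * Real.exp (ρ * x)) - c * ((1 - x) ^ (c - 1) * Real.exp (ρ * x))) x := by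
    intro x hx
    have hpow := ((hasDerivAt_id x).const_sub 1).rpow_const (p := c) (Or.inl (sub_pos.2 hx.2).ne')
    refine (hpow.mul ((hasDerivAt_id x).const_mul ρ).exp).congr_deriv ?_
    simp only [id_eq]
    ring
  have hFTC : ρ * J - c * I = 0 - 1 := by
    rw [← intervalIntegral.integral_const_mul, ← intervalIntegral.integral_const_mul,
      ← intervalIntegral.integral_sub (hJ.const_mul ρ) (hI.const_mul c),
      intervalIntegral.integral_eq_sub_of_hasDerivAt_of_le zero_le_one hcont.continuousOn hderiv
        ((hJ.const_mul ρ).sub (hI.const_mul c))]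
    simp [zero_rpow hc.ne']
  field_simp
  linarith

/-- for the affine firing function `b(x) = λ x + δ` with `λ > 0`,
`δ ≥ 0` and `ρ = λ a`, one has
`C(β) = 1/(ρβ + δ) + (ρβ/(ρβ + δ)) ∫₀¹ (1-x)^{ρβ+δ} e^{ρβ x} dx` for every `β > 0`. -/
theorem Cfun_affine_formula
    (a lam δ : ℝ) (ha : 0 < a) (hlam : 0 < lam) (hδ : 0 ≤ δ)
    (β : ℝ) (hβ : 0 < β) :
    Cfun a (fun x => lam * x + δ) β =
      1 / (lam * a * β + δ) +
        (lam * a * β / (lam * a * β + δ)) *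
          ∫ x in (0:ℝ)..1, (1 - x) ^ (lam * a * β + δ) * Real.exp (lam * a * β * x) := by
  rw [Cfun_affine, integral_one_sub_rpow_sub_one_mul_exp _ (by positivity)]
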